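/- Let φ : ℝ^d → ℝ be a convex differentiable function with gradient T = ∇φ, and let a_1, b_1, a_2, b_2 ≥ 0. For points x_1, …, x_m ∈ ℝ^d (with the cyclic convention x_{m+1} := x_1), define u_i := a_1 x_i + b_1 T(x_i) and v_i := a_2 x_i + b_2 T(x_i). Then Σ_{i=1}^{m} ⟨u_{i+1}, v_{i+1} − v_i⟩ ≥ 0. -/

import Mathlib

/-!
Each summand dominates an increment of one potential. With `T = ∇φ`, the four bilinear pieces of
`⟪u (i+1), v (i+1) - v i⟫` satisfy `⟪y, y - x⟫ ≥ ‖y‖²/2 - ‖x‖²/2` (likewise for `T`),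
`⟪T y, y - x⟫ ≥ φ y - φ x` and `⟪y, T y - T x⟫ ≥ ψ y - ψ x` with `ψ = ⟪·, T ·⟫ - φ`, the last two
being the first-order convexity inequality at `y` and at `x`. Weighting by the nonnegative
products of coefficients, the increments of the potential telescope to zero around the cycle.
-/

open InnerProductSpace

theorem ConvexOn.le_sub_of_hasFDerivAt {E : Type*} [NormedAddCommGroup E] [NormedSpace ℝ E]
    {s : Set E} {φ : E → ℝ} {φ' : E →L[ℝ] ℝ} {p q : E} (hφ : ConvexOn ℝ s φ)
    (hp : p ∈ s) (hq : q ∈ s) (hφ' : HasFDerivAt φ φ' p) :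
    φ' (q - p) ≤ φ q - φ p := by
  let ℓ : ℝ →ᵃ[ℝ] E := AffineMap.lineMap p q
  have hline : ConvexOn ℝ (ℓ ⁻¹' s) (φ ∘ ℓ) := hφ.comp_affineMap ℓ
  have hderiv : HasDerivAt (φ ∘ ℓ) (φ' (q - p)) 0 := by
    refine HasFDerivAt.comp_hasDerivAt _ ?_ AffineMap.hasDerivAt_lineMap
    rwa [AffineMap.lineMap_apply_zero]
  simpa [ℓ, slope] using hline.le_slope_of_hasDerivAt (by simpa [ℓ] using hp)
    (by simpa [ℓ] using hq) zero_lt_one hderiv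

theorem ConvexOn.inner_sub_le_of_hasGradientAt {E : Type*} [NormedAddCommGroup E]
    [InnerProductSpace ℝ E] [CompleteSpace E] {s : Set E} {φ : E → ℝ} {g p q : E}
    (hφ : ConvexOn ℝ s φ) (hp : p ∈ s) (hq : q ∈ s) (hg : HasGradientAt φ g p) :
    ⟪g, q - p⟫_ℝ ≤ φ q - φ p := by
  simpa using hφ.le_sub_of_hasFDerivAt hp hq hg.hasFDerivAt

theorem Finset.sum_range_nonneg_of_sub_le {α : Type*} [AddCommGroup α] [PartialOrder α]
    [IsOrderedAddMonoid α] {g c : ℕ → α} {m : ℕ} (hcycle : g m = g 0)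
    (hstep : ∀ i, g (i + 1) - g i ≤ c i) : 0 ≤ ∑ i ∈ Finset.range m, c i :=
  calc 0 = ∑ i ∈ Finset.range m, (g (i + 1) - g i) := by
        rw [Finset.sum_range_sub, hcycle, sub_self]
    _ ≤ ∑ i ∈ Finset.range m, c i := Finset.sum_le_sum fun i _ => hstep i

section Potential

variable {E : Type*} [NormedAddCommGroup E] [InnerProductSpace ℝ E]

theorem half_norm_sq_sub_le_inner (x y : E) : ‖y‖ ^ 2 / 2 - ‖x‖ ^ 2 / 2 ≤ ⟪y, y - x⟫_ℝ := by
  have h := norm_sub_sq_real y x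
  rw [inner_sub_right, real_inner_self_eq_norm_sq]
  nlinarith [sq_nonneg ‖y - x‖]

/-- With `T = ∇φ`, the term `⟪y, T y⟫ - φ y` is the convex conjugate `φ*` evaluated at `T y`. -/
noncomputable def affineGradientPotential (φ : E → ℝ) (T : E → E) (a₁ b₁ a₂ b₂ : ℝ) (y : E) : ℝ :=
  a₁ * a₂ * (‖y‖ ^ 2 / 2) + b₁ * b₂ * (‖T y‖ ^ 2 / 2) + a₁ * b₂ * (⟪y, T y⟫_ℝ - φ y)
    + b₁ * a₂ * φ y

theorem affineGradientPotential_sub_le {φ : E → ℝ} {T : E → E}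
    (hT : ∀ p q, ⟪T p, q - p⟫_ℝ ≤ φ q - φ p) {a₁ b₁ a₂ b₂ : ℝ} (ha₁ : 0 ≤ a₁) (hb₁ : 0 ≤ b₁)
    (ha₂ : 0 ≤ a₂) (hb₂ : 0 ≤ b₂) (x y : E) :
    affineGradientPotential φ T a₁ b₁ a₂ b₂ y - affineGradientPotential φ T a₁ b₁ a₂ b₂ x ≤
      ⟪a₁ • y + b₁ • T y, (a₂ • y + b₂ • T y) - (a₂ • x + b₂ • T x)⟫_ℝ := by
  have expand : ⟪a₁ • y + b₁ • T y, (a₂ • y + b₂ • T y) - (a₂ • x + b₂ • T x)⟫_ℝ =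
      a₁ * a₂ * ⟪y, y - x⟫_ℝ + b₁ * b₂ * ⟪T y, T y - T x⟫_ℝ
        + a₁ * b₂ * ⟪y, T y - T x⟫_ℝ + b₁ * a₂ * ⟪T y, y - x⟫_ℝ := by
    simp only [inner_add_left, inner_add_right, inner_sub_right, real_inner_smul_left,
      real_inner_smul_right]
    ring
  have hsubgrad_y : φ y - φ x ≤ ⟪T y, y - x⟫_ℝ := by
    have := hT y x
    rw [← neg_sub y x, inner_neg_right] at this
    linarith
  have hconj : (⟪y, T y⟫_ℝ - φ y) - (⟪x, T x⟫_ℝ - φ x) ≤ ⟪y, T y - T x⟫_ℝ := by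
    have := hT x y
    rw [inner_sub_right] at this ⊢
    rw [real_inner_comm (T x) y, real_inner_comm (T x) x]
    linarith
  rw [expand, affineGradientPotential, affineGradientPotential]
  linear_combination (a₁ * a₂) * half_norm_sq_sub_le_inner x y
    + (b₁ * b₂) * half_norm_sq_sub_le_inner (T x) (T y) + (a₁ * b₂) * hconj + (b₁ * a₂) * hsubgrad_y

end Potential

theorem cyclic_sum_affine_gradient_nonneg
    (d : ℕ) (φ : EuclideanSpace ℝ (Fin d) → ℝ)
    (hconv : ConvexOn ℝ Set.univ φ) (hdiff : Differentiable ℝ φ)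
    (a₁ b₁ a₂ b₂ : ℝ) (ha₁ : 0 ≤ a₁) (hb₁ : 0 ≤ b₁) (ha₂ : 0 ≤ a₂) (hb₂ : 0 ≤ b₂)
    (m : ℕ) (x : ℕ → EuclideanSpace ℝ (Fin d)) (hx : x m = x 0)
    (u v : ℕ → EuclideanSpace ℝ (Fin d))
    (hu : ∀ i, u i = a₁ • x i + b₁ • gradient φ (x i))
    (hv : ∀ i, v i = a₂ • x i + b₂ • gradient φ (x i)) :
    0 ≤ ∑ i ∈ Finset.range m, (inner ℝ (u (i + 1)) (v (i + 1) - v i) : ℝ) := by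
  have hsubgrad : ∀ p q, ⟪gradient φ p, q - p⟫_ℝ ≤ φ q - φ p := fun p q =>
    hconv.inner_sub_le_of_hasGradientAt trivial trivial (hdiff p).hasGradientAt
  simp only [hu, hv]
  exact Finset.sum_range_nonneg_of_sub_le
    (g := fun i => affineGradientPotential φ (gradient φ) a₁ b₁ a₂ b₂ (x i)) (by rw [hx])
    fun i => affineGradientPotential_sub_le hsubgrad ha₁ hb₁ ha₂ hb₂ (x i) (x (i + 1))
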